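/- Let q ≥ 1, r : Fin q → ℕ with each r k ≥ 1, A = Π k, ZMod (r k), and ω_k = exp(2πi/(r k)). Let n ≥ 1. For e : Finset (Fin n) and s : Π k, ℕ, let K^{(e,s)} : Matrix (Fin n → A) (Fin n → A) ℂ be the permutation matrix with K^{(e,s)} j i = 1 if (for every t ∈ e and every k, j t k = i t k + s k, and j t = i t for t ∉ e), else 0. Let E be a finite set of pairs (e, s) with e nonempty and s not identically 0 mod the r k, let α : E → ℝ, λ = Σ α(e,s), and π⋆ i = (Π_k r k)^{−1} if i is constant, else 0. Let P = exp((−λ) • 1 + Σ_{(e,s)∈E} α(e,s) • K^{(e,s)}).mulVec π⋆, and F j i = Π_k ω_k^{Σ_t (i t k).val·(j t k).val}. Then for every i : Fin n → A: if Σ_t i t k = 0 in ZMod (r k) for every k, then (F.mulVec P) i = exp(Σ_{(e,s)∈E} α(e,s)·((Π_k ω_k^{s k·Σ_{t∈e}(i t k).val}) − 1)), and otherwise (F.mulVec P) i = 0. -/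

import Mathlib

/-!
Row `i` of the Fourier matrix, `g ↦ χ_g(i)`, is a character in `g`, so it is a left eigenvector
of every translation matrix `K^{(e,s)}` (translation by the vector `d` equal to `s` on `e`), with
eigenvalue `χ_d(i)`. Hence it is a left eigenvector of the generator and of its exponential, with
eigenvalue `exp (Σ α (χ_d(i) - 1))`. Pairing it with the star-tree tensor leaves the average of
`χ_{(c,…,c)}(i)` over `c`, which by orthogonality of characters is `1` when every coordinate sum
of `i` vanishes and `0` otherwise.
-/

open Matrix
open NormedSpace

section
attribute [local instance] Matrix.linftyOpNormedRing Matrix.linftyOpNormedAlgebra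

theorem Matrix.vecMul_exp_of_vecMul_eq_smul {ι 𝕂 : Type*} [Fintype ι] [DecidableEq ι] [RCLike 𝕂]
    {v : ι → 𝕂} {M : Matrix ι ι 𝕂} {c : 𝕂} (h : v ᵥ* M = c • v) :
    v ᵥ* exp M = exp c • v := by
  have hpow (m : ℕ) : v ᵥ* M ^ m = c ^ m • v := by
    induction m with
    | zero => simp
    | succ m ih => rw [pow_succ, ← vecMul_vecMul, ih, smul_vecMul, h, smul_smul, pow_succ]
  have hseries := (exp_series_hasSum_exp' (𝕂 := 𝕂) M).map
    (AddMonoidHom.mk' (v ᵥ* ·) fun A B => vecMul_add A B v)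
    (continuous_const.matrix_vecMul continuous_id)
  refine hseries.unique ?_
  convert (exp_series_hasSum_exp' (𝕂 := 𝕂) c).smul_const v using 2 with m
  simp only [Function.comp_apply, AddMonoidHom.mk'_apply, vecMul_smul, hpow, smul_smul,
    smul_eq_mul]

end

theorem Matrix.vecMul_smul_one_add_sum_smul {ι β R : Type*} [Fintype ι] [DecidableEq ι]
    [CommSemiring R] {v : ι → R} {A : β → Matrix ι ι R} {μ : β → R}
    (h : ∀ b, v ᵥ* A b = μ b • v) (c : R) (s : Finset β) (a : β → R) :
    v ᵥ* (c • 1 + ∑ b ∈ s, a b • A b) = (c + ∑ b ∈ s, a b * μ b) • v := by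
  simp only [vecMul_add, vecMul_smul, vecMul_one, vecMul_sum, h, smul_smul, add_smul,
    Finset.sum_smul]

def translationMatrix {G : Type*} (R : Type*) [Add G] [DecidableEq G] [Zero R] [One R] (d : G) :
    Matrix G G R :=
  of fun j g => if j = g + d then 1 else 0

theorem vecMul_translationMatrix {G R : Type*} [AddGroup G] [Fintype G] [DecidableEq G]
    [NonAssocSemiring R] (d : G) (v : G → R) :
    v ᵥ* translationMatrix R d = fun g => v (g + d) := by
  ext g
  simp [translationMatrix, vecMul, dotProduct]

theorem Fintype.sum_mul_ite_exists_const {ι G R : Type*} [Fintype ι] [Nonempty ι] [Fintype G]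
    [DecidableEq ι] [DecidablePred fun g : ι → G => ∃ c, ∀ t, g t = c]
    [NonUnitalNonAssocSemiring R] (v : (ι → G) → R) (a : R) :
    ∑ g, v g * (if ∃ c, ∀ t, g t = c then a else 0) = (∑ c, v (fun _ => c)) * a := by
  rw [Finset.sum_mul]
  refine (Fintype.sum_of_injective (Function.const ι) Function.const_injective _ _ ?_ ?_).symm
  · rintro g hg
    rw [if_neg, mul_zero]
    rintro ⟨c, hc⟩
    exact hg ⟨c, funext fun t => (hc t).symm⟩
  · intro c
    rw [if_pos ⟨c, fun _ => rfl⟩]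
    rfl

theorem Complex.exp_two_pi_I_div_pow_eq_stdAddChar (N : ℕ) [NeZero N] (m : ℕ) :
    Complex.exp (2 * Real.pi * Complex.I / N) ^ m = ZMod.stdAddChar (m : ZMod N) := by
  rw [ZMod.stdAddChar_apply, ZMod.toCircle_natCast, ← Complex.exp_nat_mul]
  ring_nf

section Fourier

variable {q n : ℕ} {r : Fin q → ℕ}

noncomputable def fourierKernel [∀ k, NeZero (r k)] (x y : Fin n → ∀ k, ZMod (r k)) : ℂ :=
  ∏ k, ZMod.stdAddChar (∑ t, x t k * y t k)

def edgeShift (e : Finset (Fin n)) (s : Fin q → ℕ) : Fin n → ∀ k, ZMod (r k) :=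
  fun t k => if t ∈ e then (s k : ZMod (r k)) else 0

theorem eq_add_edgeShift_iff (e : Finset (Fin n)) (s : Fin q → ℕ)
    (j g : Fin n → ∀ k, ZMod (r k)) :
    ((∀ t ∈ e, ∀ k, j t k = g t k + (s k : ZMod (r k))) ∧ ∀ t ∉ e, j t = g t) ↔
      j = g + edgeShift e s := by
  constructor
  · rintro ⟨hin, hout⟩
    funext t k
    by_cases ht : t ∈ e
    · simp [edgeShift, ht, hin t ht k]
    · simp [edgeShift, ht, hout t ht]
  · rintro rfl
    exact ⟨fun t ht k => by simp [edgeShift, ht], fun t ht => by ext k; simp [edgeShift, ht]⟩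

variable [∀ k, NeZero (r k)]

theorem prod_pow_val_mul_val_eq_fourierKernel {ω : Fin q → ℂ}
    (hω : ∀ k, ω k = Complex.exp (2 * Real.pi * Complex.I / (r k)))
    (x y : Fin n → ∀ k, ZMod (r k)) :
    ∏ k, ω k ^ (∑ t, (x t k).val * (y t k).val) = fourierKernel x y := by
  simp only [hω, Complex.exp_two_pi_I_div_pow_eq_stdAddChar, fourierKernel]
  push_cast [ZMod.natCast_val, ZMod.cast_id]
  rfl

theorem prod_pow_mul_sum_val_eq_fourierKernel_edgeShift {ω : Fin q → ℂ}
    (hω : ∀ k, ω k = Complex.exp (2 * Real.pi * Complex.I / (r k)))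
    (e : Finset (Fin n)) (s : Fin q → ℕ) (y : Fin n → ∀ k, ZMod (r k)) :
    ∏ k, ω k ^ (s k * ∑ t ∈ e, (y t k).val) = fourierKernel (edgeShift e s) y := by
  simp only [hω, Complex.exp_two_pi_I_div_pow_eq_stdAddChar, fourierKernel, edgeShift, ite_mul,
    zero_mul, Finset.sum_ite_mem, Finset.univ_inter, Finset.mul_sum]
  push_cast [ZMod.natCast_val, ZMod.cast_id]
  rfl

theorem fourierKernel_add_left (x x' y : Fin n → ∀ k, ZMod (r k)) :
    fourierKernel (x + x') y = fourierKernel x y * fourierKernel x' y := by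
  simp only [fourierKernel, Pi.add_apply, add_mul, Finset.sum_add_distrib,
    AddChar.map_add_eq_mul, Finset.prod_mul_distrib]

theorem vecMul_translationMatrix_fourierKernel (d y : Fin n → ∀ k, ZMod (r k)) :
    (fun g => fourierKernel g y) ᵥ* translationMatrix ℂ d =
      fourierKernel d y • fun g => fourierKernel g y := by
  rw [vecMul_translationMatrix]
  ext g
  rw [fourierKernel_add_left, Pi.smul_apply, smul_eq_mul, mul_comm]

theorem sum_fourierKernel_const (y : Fin n → ∀ k, ZMod (r k)) :
    ∑ c : ∀ k, ZMod (r k), fourierKernel (fun _ => c) y =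
      if ∀ k, ∑ t, y t k = 0 then ∏ k, (r k : ℂ) else 0 := by
  simp only [fourierKernel, ← Finset.mul_sum]
  rw [← Fintype.prod_sum fun k (a : ZMod (r k)) => ZMod.stdAddChar (a * ∑ t, y t k)]
  simp only [AddChar.sum_mulShift _ (ZMod.isPrimitive_stdAddChar _), ZMod.card,
    Nat.cast_ite, Nat.cast_zero, Fintype.prod_ite_zero]
  congr

theorem fourierKernel_dotProduct_starTensor [NeZero n] (y : Fin n → ∀ k, ZMod (r k)) :
    (fun g => fourierKernel g y) ⬝ᵥ
        (fun g : Fin n → ∀ k, ZMod (r k) =>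
          if ∃ c, ∀ t, g t = c then (∏ k, (r k : ℂ))⁻¹ else 0) =
      if ∀ k, ∑ t, y t k = 0 then 1 else 0 := by
  have hr : ∏ k, (r k : ℂ) ≠ 0 :=
    Finset.prod_ne_zero_iff.mpr fun k _ => Nat.cast_ne_zero.mpr (NeZero.ne _)
  rw [dotProduct, Fintype.sum_mul_ite_exists_const, sum_fourierKernel_const]
  split_ifs
  · exact mul_inv_cancel₀ hr
  · exact zero_mul _

end Fourier

theorem abelian_model_fourier_components_general
    (q : ℕ) (r : Fin q → ℕ) [∀ k, NeZero (r k)]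
    (n : ℕ) (hn : 1 ≤ n)
    (ω : Fin q → ℂ) (hω : ∀ k, ω k = Complex.exp (2 * Real.pi * Complex.I / (r k)))
    (K : Finset (Fin n) → (∀ k : Fin q, ℕ) →
      Matrix (Fin n → ∀ k, ZMod (r k)) (Fin n → ∀ k, ZMod (r k)) ℂ)
    (hK : ∀ (e : Finset (Fin n)) (s : ∀ k : Fin q, ℕ) (j i : Fin n → ∀ k, ZMod (r k)),
      K e s j i =
        if (∀ t ∈ e, ∀ k : Fin q, j t k = i t k + (s k : ZMod (r k))) ∧
           (∀ t ∉ e, j t = i t)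
        then 1 else 0)
    (E : Finset (Finset (Fin n) × (∀ k : Fin q, ℕ)))
    (α : Finset (Fin n) × (∀ k : Fin q, ℕ) → ℝ)
    (lam : ℝ) (hlam : lam = ∑ p ∈ E, α p)
    (πs : (Fin n → ∀ k, ZMod (r k)) → ℂ)
    (hπ : ∀ i : Fin n → ∀ k, ZMod (r k),
      πs i = if ∃ c, ∀ t : Fin n, i t = c then (∏ k : Fin q, (r k : ℂ))⁻¹ else 0)
    (P : (Fin n → ∀ k, ZMod (r k)) → ℂ)
    (hP : P = (exp ((-lam : ℂ) •
          (1 : Matrix (Fin n → ∀ k, ZMod (r k)) (Fin n → ∀ k, ZMod (r k)) ℂ)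
        + ∑ p ∈ E, (α p : ℂ) • K p.1 p.2)).mulVec πs)
    (F : Matrix (Fin n → ∀ k, ZMod (r k)) (Fin n → ∀ k, ZMod (r k)) ℂ)
    (hF : ∀ j i : Fin n → ∀ k, ZMod (r k),
      F j i = ∏ k : Fin q, (ω k) ^ (∑ t : Fin n, (i t k).val * (j t k).val)) :
    ∀ i : Fin n → ∀ k, ZMod (r k),
      F.mulVec P i =
        if ∀ k : Fin q, (∑ t : Fin n, i t k) = 0
        then Complex.exp (∑ p ∈ E, (α p : ℂ) *
          ((∏ k : Fin q, (ω k) ^ (p.2 k * ∑ t ∈ p.1, (i t k).val)) - 1))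
        else 0 := by
  intro i
  have hFi : F i = fun g => fourierKernel g i :=
    funext fun g => (hF i g).trans (prod_pow_val_mul_val_eq_fourierKernel hω g i)
  have hK' : ∀ e s, K e s = translationMatrix ℂ (edgeShift e s) := fun e s => by
    ext j g
    simp only [hK, eq_add_edgeShift_iff, translationMatrix, of_apply]
  set μ := fun p : Finset (Fin n) × (Fin q → ℕ) => fourierKernel (edgeShift p.1 p.2) i
  have heig : F i ᵥ* ((-lam : ℂ) • 1 + ∑ p ∈ E, (α p : ℂ) • K p.1 p.2) =
      (∑ p ∈ E, (α p : ℂ) * (μ p - 1)) • F i := by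
    simp only [hK', hFi, vecMul_smul_one_add_sum_smul fun p : Finset (Fin n) × (Fin q → ℕ) =>
      vecMul_translationMatrix_fourierKernel (edgeShift p.1 p.2) i]
    simp only [hlam, μ, mul_sub, mul_one, Finset.sum_sub_distrib, Complex.ofReal_sum]
    ring_nf
  have : NeZero n := ⟨by omega⟩
  calc (F *ᵥ P) i = (F i ᵥ* exp ((-lam : ℂ) • 1 + ∑ p ∈ E, (α p : ℂ) • K p.1 p.2)) ⬝ᵥ πs := by
        rw [hP, ← dotProduct_mulVec]
        rfl
    _ = Complex.exp (∑ p ∈ E, (α p : ℂ) * (μ p - 1)) * (F i ⬝ᵥ πs) := by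
        rw [vecMul_exp_of_vecMul_eq_smul heig, smul_dotProduct, ← Complex.exp_eq_exp_ℂ,
          smul_eq_mul]
    _ = _ := by
        rw [hFi, funext hπ, fourierKernel_dotProduct_starTensor]
        simp only [prod_pow_mul_sum_val_eq_fourierKernel_edgeShift hω, μ]
        split_ifs
        · exact mul_one _
        · exact mul_zero _

/-- First part of the inversion of an arbitrary abelian group-based model
`G = ∏_k ℤ_{r_k}`: the Fourier transform of a phylogenetic tensor has components
`exp(Σ_{(e,s)∈E} α(e,s)·((Π_k ω_k^{s k·Σ_{t∈e}(i t k).val}) − 1))` on index strings whose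
coordinatewise sums vanish, and `0` otherwise. -/
theorem abelian_model_fourier_components
    (q : ℕ) (hq : 1 ≤ q) (r : Fin q → ℕ) [∀ k, NeZero (r k)] (hr : ∀ k, 1 ≤ r k)
    (n : ℕ) (hn : 1 ≤ n)
    (ω : Fin q → ℂ) (hω : ∀ k, ω k = Complex.exp (2 * Real.pi * Complex.I / (r k)))
    (K : Finset (Fin n) → (∀ k : Fin q, ℕ) →
      Matrix (Fin n → ∀ k, ZMod (r k)) (Fin n → ∀ k, ZMod (r k)) ℂ)
    (hK : ∀ (e : Finset (Fin n)) (s : ∀ k : Fin q, ℕ) (j i : Fin n → ∀ k, ZMod (r k)),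
      K e s j i =
        if (∀ t ∈ e, ∀ k : Fin q, j t k = i t k + (s k : ZMod (r k))) ∧
           (∀ t ∉ e, j t = i t)
        then 1 else 0)
    (E : Finset (Finset (Fin n) × (∀ k : Fin q, ℕ)))
    (hE : ∀ p ∈ E, p.1.Nonempty ∧ ¬(∀ k : Fin q, (p.2 k : ZMod (r k)) = 0))
    (α : Finset (Fin n) × (∀ k : Fin q, ℕ) → ℝ)
    (lam : ℝ) (hlam : lam = ∑ p ∈ E, α p)
    (πs : (Fin n → ∀ k, ZMod (r k)) → ℂ)
    (hπ : ∀ i : Fin n → ∀ k, ZMod (r k),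
      πs i = if ∃ c, ∀ t : Fin n, i t = c then (∏ k : Fin q, (r k : ℂ))⁻¹ else 0)
    (P : (Fin n → ∀ k, ZMod (r k)) → ℂ)
    (hP : P = (exp ((-lam : ℂ) •
          (1 : Matrix (Fin n → ∀ k, ZMod (r k)) (Fin n → ∀ k, ZMod (r k)) ℂ)
        + ∑ p ∈ E, (α p : ℂ) • K p.1 p.2)).mulVec πs)
    (F : Matrix (Fin n → ∀ k, ZMod (r k)) (Fin n → ∀ k, ZMod (r k)) ℂ)
    (hF : ∀ j i : Fin n → ∀ k, ZMod (r k),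
      F j i = ∏ k : Fin q, (ω k) ^ (∑ t : Fin n, (i t k).val * (j t k).val)) :
    ∀ i : Fin n → ∀ k, ZMod (r k),
      F.mulVec P i =
        if ∀ k : Fin q, (∑ t : Fin n, i t k) = 0
        then Complex.exp (∑ p ∈ E, (α p : ℂ) *
          ((∏ k : Fin q, (ω k) ^ (p.2 k * ∑ t ∈ p.1, (i t k).val)) - 1))
        else 0 :=
  abelian_model_fourier_components_general q r n hn ω hω K hK E α lam hlam πs hπ P hP F hF
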